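/- arXiv:2510.01086 — 4 statements merged into one kernel-verified Lean document; each statement's English description precedes it below -/
import Mathlib

section
/- The polynomial B(x) = 71162 x^9 + 2093958 x^8 + 12614544 x^7 + 27186264 x^6 + 27111294 x^5 + 13439034 x^4 + 3294228 x^3 + 371628 x^2 + 16110 x + 163 is not real-rooted; i.e., it has a complex root that is not real. -/
/-!
A polynomial with real coefficients whose roots are all real satisfies Laguerre's inequality
`p(t) p''(t) ≤ p'(t)²` at every real `t`: it holds for constants and linear factors, and is
preserved under products because the defect `p'² - p p''` of `f g` equals
`g² (f'² - f f'') + f² (g'² - g g'')`. The polynomial `B` violates it at `t = -1`.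
-/

open Polynomial

/-- The normalized inverse Kazhdan--Lusztig polynomial of the rank-19 counterexample matroid. -/
noncomputable def normalizedQ : Polynomial ℂ :=
  C 71162 * X ^ 9 + C 2093958 * X ^ 8 + C 12614544 * X ^ 7 + C 27186264 * X ^ 6 +
    C 27111294 * X ^ 5 + C 13439034 * X ^ 4 + C 3294228 * X ^ 3 + C 371628 * X ^ 2 +
    C 16110 * X + C 163

namespace Polynomial

section Laguerre

variable {R : Type*} [CommRing R] [LinearOrder R] [IsStrictOrderedRing R]

theorem eval_mul_eval_derivative_derivative_le_sq_mul {f g : R[X]} {t : R}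
    (hf : f.eval t * f.derivative.derivative.eval t ≤ f.derivative.eval t ^ 2)
    (hg : g.eval t * g.derivative.derivative.eval t ≤ g.derivative.eval t ^ 2) :
    (f * g).eval t * (f * g).derivative.derivative.eval t ≤ (f * g).derivative.eval t ^ 2 := by
  simp only [derivative_mul, derivative_add, eval_add, eval_mul]
  nlinarith [mul_le_mul_of_nonneg_left (sub_nonneg.2 hf) (sq_nonneg (g.eval t)),
    mul_le_mul_of_nonneg_left (sub_nonneg.2 hg) (sq_nonneg (f.eval t))]

theorem Splits.eval_mul_eval_derivative_derivative_le_sq {p : R[X]} (hp : p.Splits) (t : R) :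
    p.eval t * p.derivative.derivative.eval t ≤ p.derivative.eval t ^ 2 := by
  induction hp using Submonoid.closure_induction with
  | mem q hq => obtain ⟨a, rfl⟩ | ⟨a, rfl⟩ := hq <;> simp
  | one => simp
  | mul f g _ _ hf hg => exact eval_mul_eval_derivative_derivative_le_sq_mul hf hg

end Laguerre

theorem splits_of_isRoot_map_ofReal_im_eq_zero {p : ℝ[X]}
    (h : ∀ z : ℂ, (p.map Complex.ofRealHom).IsRoot z → z.im = 0) : p.Splits :=
  Splits.of_splits_map _ (IsAlgClosed.splits _) fun z hz =>
    ⟨z.re, Complex.ext rfl (h z (isRoot_of_mem_roots hz)).symm⟩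

end Polynomial

noncomputable def normalizedQReal : ℝ[X] :=
  C 71162 * X ^ 9 + C 2093958 * X ^ 8 + C 12614544 * X ^ 7 + C 27186264 * X ^ 6 +
    C 27111294 * X ^ 5 + C 13439034 * X ^ 4 + C 3294228 * X ^ 3 + C 371628 * X ^ 2 +
    C 16110 * X + C 163

theorem normalizedQReal_map_ofReal : normalizedQReal.map Complex.ofRealHom = normalizedQ := by
  simp [normalizedQReal, normalizedQ]

/-- The polynomial `B(x) = 71162 x^9 + ⋯ + 163` is not real-rooted: it has a complex root
with nonzero imaginary part. -/
theorem normalizedQ_not_real_rooted :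
    ∃ z : ℂ, normalizedQ.IsRoot z ∧ z.im ≠ 0 := by
  by_contra! h
  rw [← normalizedQReal_map_ofReal] at h
  have laguerre :=
    (splits_of_isRoot_map_ofReal_im_eq_zero h).eval_mul_eval_derivative_derivative_le_sq (-1)
  -- `B(-1) = -16291`, `B'(-1) = 28890`, `B''(-1) = -2064528`
  norm_num [normalizedQReal] at laguerre
end

section
/- For the uniform matroid U_{k,n} with 0 < k < n, the closed formula Q_{U_{k,n}}(x) = binom(n,k) · Σ_{j=0}^{⌊(k-1)/2⌋} [(n-k)(k-2j) / ((n-k+j)(n-j))] · binom(k,j) · x^j satisfies the recursion Q_{U_{k,n}}(x) = Q_{U_{k,n-1}}(x) + (1+x)·Q_{U_{k-1,n-1}}(x) − τ_{k-1,n-1}·x^{k/2}, where τ_{k-1,n-1} = binom(n-1,k-1)·binom(k-1,⌊(k-2)/2⌋)·4(n-k)/((2n-k-2)(2n-k)) if k−1 is odd and 0 if k−1 is even, for all 1 < k < n. -/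
/-! Compare coefficients of `x^j`. Write `c(k,n,j)` for the `j`-th Gao–Xie coefficient.
Expressing all binomial coefficients through `C(n-1,k-1)·C(k-1,j-1)` turns
`c(k,n,j) = c(k,n-1,j) + c(k-1,n-1,j) + c(k-1,n-1,j-1)` (for `0 < j < k < n`) into an identity of
rational functions, and the constant terms `C(n-1,k-1)` obey Pascal's rule. The truncations at
`2j < k` agree because `c(k,n,j) = 0` when `2j = k`; the one surviving boundary term, at
`j = k/2` for even `k`, is `c(k-1,n-1,k/2-1) = τ_{k-1,n-1}`. -/

open Polynomial

/-- The closed formula of Gao–Xie for the inverse Kazhdan–Lusztig polynomial of the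
uniform matroid `U_{k,n}` (for `0 < k < n`), together with `Q = 1` for Boolean matroids
(`k = 0` or `k = n`). -/
noncomputable def Quniform (k n : ℕ) : Polynomial ℚ :=
  if 0 < k ∧ k < n then
    C (n.choose k : ℚ) * ∑ j ∈ Finset.range ((k - 1) / 2 + 1),
      C ((((n : ℚ) - k) * ((k : ℚ) - 2 * j)) / (((n : ℚ) - k + j) * ((n : ℚ) - j))
          * (k.choose j : ℚ)) * X ^ j
  else 1

/-- The quantity `τ_{k-1,n-1}` appearing in the deletion recursion for uniform matroids. -/
noncomputable def tauDel (k n : ℕ) : ℚ :=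
  if Odd (k - 1) then
    ((n - 1).choose (k - 1) : ℚ) * ((k - 1).choose ((k - 2) / 2) : ℚ) * 4 * ((n : ℚ) - k)
      / ((2 * (n : ℚ) - k - 2) * (2 * (n : ℚ) - k))
  else 0

/-- Vanishes identically for `k = n`, also at `j = 0` where `0 / 0 = 0`, although
`Quniform k k = 1`; constant terms are therefore read off as binomial coefficients. -/
noncomputable def gaoXieCoeff (k n j : ℕ) : ℚ :=
  (n.choose k : ℚ) * ((((n : ℚ) - k) * ((k : ℚ) - 2 * j)) / (((n : ℚ) - k + j) * ((n : ℚ) - j))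
    * (k.choose j : ℚ))

lemma coeff_Quniform {k n : ℕ} (hk : 0 < k) (hkn : k < n) (j : ℕ) :
    (Quniform k n).coeff j = if 2 * j < k then gaoXieCoeff k n j else 0 := by
  rw [Quniform, if_pos ⟨hk, hkn⟩, coeff_C_mul, finsetSum_coeff]
  simp only [coeff_C_mul_X_pow, Finset.sum_ite_eq, Finset.mem_range, mul_ite, mul_zero]
  exact if_congr (by omega) rfl rfl

lemma Quniform_self (k : ℕ) : Quniform k k = 1 := by
  simp [Quniform]

lemma gaoXieCoeff_self (k j : ℕ) : gaoXieCoeff k k j = 0 := by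
  simp [gaoXieCoeff]

lemma gaoXieCoeff_of_two_mul_eq {k n j : ℕ} (h : 2 * j = k) : gaoXieCoeff k n j = 0 := by
  simp [gaoXieCoeff, ← h]

lemma coeff_succ_Quniform_of_le {k n : ℕ} (hk : 0 < k) (hkn : k ≤ n) (j : ℕ) :
    (Quniform k n).coeff (j + 1) = if 2 * (j + 1) < k then gaoXieCoeff k n (j + 1) else 0 := by
  rcases hkn.lt_or_eq with hkn | rfl
  · exact coeff_Quniform hk hkn _
  · simp [Quniform_self, gaoXieCoeff_self, coeff_one]

lemma cast_choose_succ_succ (n k : ℕ) :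
    ((n + 1).choose (k + 1) : ℚ) = n.choose k * (n + 1) / (k + 1) := by
  rw [eq_div_iff (by positivity)]
  exact_mod_cast (Nat.add_one_mul_choose_eq n k).symm.trans (mul_comm _ _)

lemma cast_choose_succ_right {n k : ℕ} (h : k ≤ n) :
    (n.choose (k + 1) : ℚ) = n.choose k * (n - k) / (k + 1) := by
  rw [eq_div_iff (by positivity), ← Nat.cast_sub h]
  exact_mod_cast Nat.choose_succ_right_eq n k

lemma gaoXieCoeff_zero {k n : ℕ} (hk : 0 < k) (hkn : k < n) :
    gaoXieCoeff k n 0 = (n - 1).choose (k - 1) := by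
  obtain ⟨k, rfl⟩ : ∃ k', k = k' + 1 := ⟨k - 1, by omega⟩
  obtain ⟨n, rfl⟩ : ∃ n', n = n' + 1 := ⟨n - 1, by omega⟩
  have hkn' : (k : ℚ) + 1 < n + 1 := by exact_mod_cast hkn
  have hd : (n : ℚ) + 1 - (k + 1) ≠ 0 := by intro h; linarith
  rw [gaoXieCoeff, cast_choose_succ_succ]
  push_cast
  simp only [Nat.choose_zero_right, Nat.cast_one, add_zero, sub_zero, mul_zero, mul_one]
  field_simp

lemma coeff_zero_Quniform_of_le {k n : ℕ} (hk : 0 < k) (hkn : k ≤ n) :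
    (Quniform k n).coeff 0 = (n - 1).choose (k - 1) := by
  rcases hkn.lt_or_eq with hkn | rfl
  · rw [coeff_Quniform hk hkn, if_pos hk, gaoXieCoeff_zero hk hkn]
  · simp [Quniform_self]

lemma gaoXieCoeff_succ_succ_succ {j k n : ℕ} (hjk : j < k) (hkn : k < n) :
    gaoXieCoeff (k + 1) (n + 1) (j + 1) =
      gaoXieCoeff (k + 1) n (j + 1) + gaoXieCoeff k n (j + 1) + gaoXieCoeff k n j := by
  have hjk' : (j : ℚ) + 1 ≤ k := by exact_mod_cast hjk
  have hkn' : (k : ℚ) + 1 ≤ n := by exact_mod_cast hkn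
  have h0 : (0 : ℚ) ≤ j := by positivity
  have d1 : (n : ℚ) + 1 - (k + 1) + (j + 1) ≠ 0 := by intro h; linarith
  have d2 : (n : ℚ) + 1 - (j + 1) ≠ 0 := by intro h; linarith
  have d3 : (n : ℚ) - (k + 1) + (j + 1) ≠ 0 := by intro h; linarith
  have d4 : (n : ℚ) - (j + 1) ≠ 0 := by intro h; linarith
  have d5 : (n : ℚ) - k + (j + 1) ≠ 0 := by intro h; linarith
  have d6 : (n : ℚ) - k + j ≠ 0 := by intro h; linarith
  have d7 : (n : ℚ) - j ≠ 0 := by intro h; linarith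
  unfold gaoXieCoeff
  rw [cast_choose_succ_succ, cast_choose_succ_succ, cast_choose_succ_right hkn.le,
    cast_choose_succ_right hjk.le]
  push_cast
  field_simp
  ring

lemma tauDel_two_mul_succ {j n : ℕ} (h : 2 * (j + 1) ≤ n) :
    tauDel (2 * (j + 1)) (n + 1) = gaoXieCoeff (2 * j + 1) n j := by
  have h' : 2 * ((j : ℚ) + 1) ≤ n := by exact_mod_cast h
  have d1 : (n : ℚ) - (2 * j + 1) + j ≠ 0 := by intro h; linarith
  have d2 : (n : ℚ) - j ≠ 0 := by intro h; linarith
  rw [tauDel, if_pos ⟨j, by omega⟩, gaoXieCoeff, show 2 * (j + 1) - 1 = 2 * j + 1 by omega,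
    show (2 * (j + 1) - 2) / 2 = j by omega, Nat.add_sub_cancel]
  push_cast
  rw [show (2 * ((n : ℚ) + 1) - 2 * (j + 1) - 2) * (2 * ((n : ℚ) + 1) - 2 * (j + 1)) =
    4 * ((n - (2 * j + 1) + j) * (n - j)) by ring]
  field_simp
  ring

lemma coeff_succ_C_tauDel_mul_X_pow {k n : ℕ} (hkn : k < n) (j : ℕ) :
    (C (tauDel (k + 1) (n + 1)) * X ^ ((k + 1) / 2)).coeff (j + 1) =
      if 2 * (j + 1) = k + 1 then gaoXieCoeff k n j else 0 := by
  rw [coeff_C_mul_X_pow]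
  by_cases heven : 2 * (j + 1) = k + 1
  · rw [if_pos (by omega), if_pos heven, ← heven, tauDel_two_mul_succ (by omega)]
    congr 1; omega
  · rw [if_neg heven]
    split_ifs with hj
    · rw [tauDel, if_neg]
      exact Nat.not_odd_iff_even.mpr ⟨j + 1, by omega⟩
    · rfl

/-- The inverse Kazhdan–Lusztig deletion recursion for uniform matroids:
`Q_{U_{k,n}}(x) = Q_{U_{k,n-1}}(x) + (1+x)·Q_{U_{k-1,n-1}}(x) − τ_{k-1,n-1}·x^{k/2}`
for all `1 < k < n`. -/
theorem Quniform_deletion_recursion (k n : ℕ) (hk : 1 < k) (hn : k < n) :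
    Quniform k n =
      Quniform k (n - 1) + (1 + X) * Quniform (k - 1) (n - 1)
        - C (tauDel k n) * X ^ (k / 2) := by
  obtain ⟨k, rfl⟩ : ∃ k', k = k' + 1 := ⟨k - 1, by omega⟩
  obtain ⟨n, rfl⟩ : ∃ n', n = n' + 1 := ⟨n - 1, by omega⟩
  replace hk : 0 < k := by omega
  replace hn : k < n := by omega
  simp only [Nat.add_sub_cancel]
  ext (_ | j)
  · rw [coeff_sub, coeff_add, mul_coeff_zero, coeff_C_mul_X_pow, if_neg (by omega),
      coeff_zero_Quniform_of_le (by omega) (by omega), coeff_zero_Quniform_of_le (by omega) hn,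
      coeff_zero_Quniform_of_le hk hn.le, Nat.add_sub_cancel, Nat.add_sub_cancel,
      Nat.choose_eq_choose_pred_add (by omega) hk]
    simp only [Nat.cast_add, coeff_add, coeff_one_zero, coeff_X_zero, add_zero, one_mul, sub_zero]
    ring
  · rw [coeff_sub, coeff_add, add_mul, one_mul, coeff_add, coeff_X_mul,
      coeff_Quniform (by omega) (by omega), coeff_succ_Quniform_of_le (by omega) hn,
      coeff_Quniform hk hn, coeff_Quniform hk hn, coeff_succ_C_tauDel_mul_X_pow hn]
    rcases lt_trichotomy (2 * (j + 1)) k with hlt | heq | hgt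
    · rw [if_pos (by omega), if_pos (by omega), if_pos hlt, if_pos (by omega), if_neg (by omega),
        gaoXieCoeff_succ_succ_succ (by omega) hn]
      ring
    · rw [if_pos (by omega), if_pos (by omega), if_neg (by omega), if_pos (by omega),
        if_neg (by omega), gaoXieCoeff_succ_succ_succ (by omega) hn, gaoXieCoeff_of_two_mul_eq heq]
      ring
    · rw [if_neg (by omega), if_neg (by omega), if_neg (by omega)]
      split_ifs <;> first | omega | ring
end

section
/- For 0 < k < n, define Y_{k,n}(x) as the explicit binomial sum Y_{k,n}(x) = Σ_{i=0}^{⌊k/2⌋} binom(n,i)·binom(n-i-1,n-k)·x^i + Σ_{i=0}^{⌊(k-1)/2⌋} binom(n,i)·binom(n-i-1,n-k)·x^{k-i}, and set Y_{n,n}(x) = (1+x)^n. Then for 1 < k < n the recursion Y_{k,n}(x) = Y_{k,n-1}(x) + (1+x)·Y_{k-1,n-1}(x) − τ_{k-1,n-1}·x^{k/2} holds, where τ_{k-1,n-1} = binom(n-1,k-1)·binom(k-1,⌊(k-2)/2⌋)·4(n-k)/((2n-k-2)(2n-k)) if k−1 is odd and 0 otherwise. -/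
open Polynomial

/-- The inverse `Z`-polynomial of the uniform matroid `U_{k,n}`: the explicit binomial sum
of Gao–Ruan–Xie for `k < n`, and `(1+x)^n` for the Boolean matroid `U_{n,n}`. -/
noncomputable def Yuniform (k n : ℕ) : Polynomial ℚ :=
  if k < n then
    (∑ i ∈ Finset.range (k / 2 + 1),
        C ((n.choose i : ℚ) * ((n - i - 1).choose (n - k) : ℚ)) * X ^ i) +
    ∑ i ∈ Finset.range ((k - 1) / 2 + 1),
        C ((n.choose i : ℚ) * ((n - i - 1).choose (n - k) : ℚ)) * X ^ (k - i)
  else (1 + X) ^ n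

/-! Compare coefficients. With `T k n i = binom(n,i)·binom(n-i-1,n-k)`, the coefficient of
`x^j` in `Y_{k,n}` is `T k n (min j (k-j))` for `j ≤ k`, also in the Boolean case `k = n`, so
every polynomial in the recursion is palindromic. Away from the middle, the recursion is Pascal's
rule applied to both binomials: `T k n i = T k (n-1) i + T (k-1) (n-1) i + T (k-1) (n-1) (i-1)`.
At `j = k/2` with `k` even, both contributions of `(1+x)·Y_{k-1,n-1}` equal
`T (k-1) (n-1) (k/2-1)`, whereas Pascal's rule asks for one of them to be `T (k-1) (n-1) (k/2)`;
the defect is `τ_{k-1,n-1}`. -/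

def yuniformTerm (k n i : ℕ) : ℚ :=
  (n.choose i : ℚ) * ((n - i - 1).choose (n - k) : ℚ)

def yuniformCoeff (k n j : ℕ) : ℚ :=
  if j ≤ k then yuniformTerm k n (min j (k - j)) else 0

section
variable {k n i j : ℕ}

theorem yuniformCoeff_of_two_mul_le (h : 2 * j ≤ k) :
    yuniformCoeff k n j = yuniformTerm k n j := by
  rw [yuniformCoeff, if_pos (by omega), min_eq_left (by omega)]

theorem yuniformCoeff_of_le_two_mul (h : k ≤ 2 * j) (hj : j ≤ k) :
    yuniformCoeff k n j = yuniformTerm k n (k - j) := by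
  rw [yuniformCoeff, if_pos hj, min_eq_right (by omega)]

theorem yuniformCoeff_of_lt (h : k < j) : yuniformCoeff k n j = 0 := by
  rw [yuniformCoeff, if_neg (by omega)]

theorem yuniformTerm_pascal (hk : 0 < k) (hkn : k < n) (hi : i + 2 ≤ n) :
    yuniformTerm k n i = yuniformTerm k (n - 1) i + yuniformTerm (k - 1) (n - 1) i +
      if 1 ≤ i then yuniformTerm (k - 1) (n - 1) (i - 1) else 0 := by
  obtain ⟨m, hm⟩ : ∃ m, n - i - 1 = m + 1 := ⟨n - i - 2, by omega⟩
  obtain ⟨b, hb⟩ : ∃ b, n - k = b + 1 := ⟨n - k - 1, by omega⟩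
  have hrow : ((m + 1).choose (b + 1) : ℚ) = m.choose b + m.choose (b + 1) := by
    rw [Nat.choose_succ_succ']; push_cast; ring
  simp only [yuniformTerm, hm, hb, show n - 1 - i - 1 = m by omega, show n - 1 - k = b by omega,
    show n - 1 - (k - 1) = b + 1 by omega]
  rcases Nat.eq_zero_or_pos i with rfl | hi0
  · simp [hrow]
  · obtain ⟨i, rfl⟩ : ∃ i', i = i' + 1 := ⟨i - 1, by omega⟩
    obtain ⟨n, rfl⟩ : ∃ n', n = n' + 1 := ⟨n - 1, by omega⟩
    rw [if_pos (by omega), Nat.add_sub_cancel, Nat.add_sub_cancel, Nat.choose_succ_succ',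
      show n - i - 1 = m + 1 by omega, hrow]
    push_cast; ring

theorem tauDel_two_mul_add_one (m n : ℕ) : tauDel (2 * m + 1) n = 0 :=
  if_neg (by simp)

theorem tauDel_eq_yuniformTerm_sub (b c : ℕ) :
    tauDel (2 * b + 2) (2 * b + c + 3) =
      yuniformTerm (2 * b + 1) (2 * b + c + 2) b -
        yuniformTerm (2 * b + 1) (2 * b + c + 2) (b + 1) := by
  set N := 2 * b + c + 2
  have hA : (N.choose (b + 1) : ℚ) = N.choose b * (b + c + 2) / (b + 1) := by
    rw [eq_div_iff (by positivity)]
    have := Nat.choose_succ_right_eq N b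
    rw [show N - b = b + c + 2 by omega] at this
    exact_mod_cast this
  have hB : ((b + c).choose (c + 1) : ℚ) = (b + c + 1).choose (c + 1) * b / (b + c + 1) := by
    rw [eq_div_iff (by positivity)]
    have := Nat.choose_mul_succ_eq (b + c) (c + 1)
    rw [show b + c + 1 - (c + 1) = b by omega] at this
    exact_mod_cast this
  have hC : (N.choose (2 * b + 1) : ℚ) * (2 * b + 1).choose b =
      N.choose b * (b + c + 1).choose (c + 1) * (b + c + 2) / (b + 1) := by
    rw [eq_div_iff (by positivity)]
    have h1 := Nat.choose_mul (n := N) (k := 2 * b + 1) (s := b) (by omega)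
    have h2 := Nat.add_one_mul_choose_eq (b + (c + 1)) b
    rw [show N - b = b + c + 2 by omega, show 2 * b + 1 - b = b + 1 by omega] at h1
    rw [Nat.choose_symm_add, show b + (c + 1) + 1 = b + c + 2 by omega,
      show b + (c + 1) = b + c + 1 by omega] at h2
    have h1' : (N.choose (2 * b + 1) : ℚ) * (2 * b + 1).choose b =
        N.choose b * (b + c + 2).choose (b + 1) := by exact_mod_cast h1
    have h2' : ((b + c + 2 : ℕ) : ℚ) * (b + c + 1).choose (c + 1) =
        (b + c + 2).choose (b + 1) * (b + 1 : ℕ) := by exact_mod_cast h2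
    push_cast at h2'
    rw [h1', mul_assoc, ← h2']
    ring
  rw [tauDel, if_pos ⟨b, by omega⟩]
  simp only [yuniformTerm, show 2 * b + c + 3 - 1 = N by omega,
    show 2 * b + 2 - 1 = 2 * b + 1 by omega, show (2 * b + 2 - 2) / 2 = b by omega,
    show N - b - 1 = b + c + 1 by omega, show N - (b + 1) - 1 = b + c by omega,
    show N - (2 * b + 1) = c + 1 by omega]
  rw [hA, hB, hC]
  push_cast
  rw [show (2 * (2 * b + c + 3) - (2 * b + 2) - 2) * (2 * (2 * b + c + 3) - (2 * b + 2) : ℚ) =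
    4 * ((b + c + 1) * (b + c + 2)) by ring]
  field_simp
  ring

theorem Yuniform_of_lt (h : k < n) :
    Yuniform k n = (∑ i ∈ Finset.range (k / 2 + 1), C (yuniformTerm k n i) * X ^ i) +
      ∑ i ∈ Finset.range ((k - 1) / 2 + 1), C (yuniformTerm k n i) * X ^ (k - i) :=
  if_pos h

theorem coeff_Yuniform (hk : 0 < k) (hkn : k ≤ n) (j : ℕ) :
    (Yuniform k n).coeff j = yuniformCoeff k n j := by
  rcases hkn.lt_or_eq with hlt | rfl
  · rw [Yuniform_of_lt hlt, coeff_add, finsetSum_coeff, finsetSum_coeff]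
    simp only [coeff_C_mul_X_pow, Finset.sum_ite_eq, Finset.mem_range]
    by_cases hjk : j ≤ k
    · have hhigh : ∀ i ∈ Finset.range ((k - 1) / 2 + 1),
          (if j = k - i then yuniformTerm k n i else 0) =
            if k - j = i then yuniformTerm k n i else 0 := by
        intro i hi
        rw [Finset.mem_range] at hi
        exact if_congr (by omega) rfl rfl
      rw [Finset.sum_congr rfl hhigh, Finset.sum_ite_eq]
      simp only [Finset.mem_range]
      by_cases hlow : 2 * j ≤ k
      · rw [yuniformCoeff_of_two_mul_le hlow, if_pos (by omega), if_neg (by omega), add_zero]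
      · rw [yuniformCoeff_of_le_two_mul (by omega) hjk, if_neg (by omega), if_pos (by omega),
          zero_add]
    · rw [yuniformCoeff_of_lt (by omega), if_neg (by omega), zero_add]
      exact Finset.sum_eq_zero fun i hi => if_neg (by rw [Finset.mem_range] at hi; omega)
  · rw [Yuniform, if_neg (lt_irrefl k), coeff_one_add_X_pow]
    by_cases hjk : j ≤ k
    · rw [yuniformCoeff, if_pos hjk, yuniformTerm]
      rcases le_total j (k - j) with h | h
      · simp [min_eq_left h]
      · simp [min_eq_right h, Nat.choose_symm hjk]
    · rw [yuniformCoeff_of_lt (by omega), Nat.choose_eq_zero_of_lt (by omega), Nat.cast_zero]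

theorem yuniformCoeff_deletion_of_two_mul_ne (hk : 1 < k) (hkn : k < n) (hj : 2 * j ≠ k) :
    yuniformCoeff k n j =
      yuniformCoeff k (n - 1) j + yuniformCoeff (k - 1) (n - 1) j +
        if 1 ≤ j then yuniformCoeff (k - 1) (n - 1) (j - 1) else 0 := by
  have pascal (i : ℕ) (hi : 2 * i ≤ k) :=
    yuniformTerm_pascal (i := i) (by omega : 0 < k) hkn (by omega)
  rcases hj.lt_or_gt with hlow | hhigh
  · rw [yuniformCoeff_of_two_mul_le hlow.le, yuniformCoeff_of_two_mul_le hlow.le,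
      yuniformCoeff_of_two_mul_le (k := k - 1) (j := j) (by omega), pascal j hlow.le]
    split_ifs with hj
    · rw [yuniformCoeff_of_two_mul_le (by omega)]
    · rfl
  by_cases hjk : j ≤ k
  · rw [yuniformCoeff_of_le_two_mul hhigh.le hjk, yuniformCoeff_of_le_two_mul hhigh.le hjk,
      if_pos (show 1 ≤ j by omega),
      yuniformCoeff_of_le_two_mul (k := k - 1) (j := j - 1) (by omega) (by omega),
      pascal (k - j) (by omega), show k - 1 - (j - 1) = k - j by omega]
    rcases hjk.lt_or_eq with hjk | rfl
    · rw [yuniformCoeff_of_le_two_mul (k := k - 1) (by omega) (by omega),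
        if_pos (show 1 ≤ k - j by omega), show k - 1 - j = k - j - 1 by omega]
      ring
    · rw [yuniformCoeff_of_lt (k := j - 1) (by omega), Nat.sub_self,
        if_neg (show ¬ 1 ≤ 0 by omega)]
      ring
  · rw [yuniformCoeff_of_lt (by omega), yuniformCoeff_of_lt (by omega),
      yuniformCoeff_of_lt (by omega), if_pos (show 1 ≤ j by omega),
      yuniformCoeff_of_lt (by omega)]
    ring

theorem yuniformCoeff_deletion_middle (b c : ℕ) :
    yuniformCoeff (2 * b + 2) (2 * b + c + 3) (b + 1) =
      yuniformCoeff (2 * b + 2) (2 * b + c + 2) (b + 1) +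
        2 * yuniformCoeff (2 * b + 1) (2 * b + c + 2) b - tauDel (2 * b + 2) (2 * b + c + 3) := by
  rw [yuniformCoeff_of_two_mul_le (by omega), yuniformCoeff_of_two_mul_le (by omega),
    yuniformCoeff_of_two_mul_le (by omega), tauDel_eq_yuniformTerm_sub,
    yuniformTerm_pascal (by omega) (by omega) (by omega), if_pos (by omega)]
  simp only [show 2 * b + c + 3 - 1 = 2 * b + c + 2 by omega,
    show 2 * b + 2 - 1 = 2 * b + 1 by omega, Nat.add_sub_cancel]
  ring

theorem yuniformCoeff_deletion (hk : 1 < k) (hkn : k < n) (j : ℕ) :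
    yuniformCoeff k n j =
      yuniformCoeff k (n - 1) j + yuniformCoeff (k - 1) (n - 1) j +
        (if 1 ≤ j then yuniformCoeff (k - 1) (n - 1) (j - 1) else 0) -
        if j = k / 2 then tauDel k n else 0 := by
  by_cases hmid : 2 * j = k
  · obtain ⟨b, rfl⟩ : ∃ b, j = b + 1 := ⟨j - 1, by omega⟩
    obtain ⟨c, rfl⟩ : ∃ c, n = 2 * b + c + 3 := ⟨n - 2 * b - 3, by omega⟩
    subst hmid
    rw [if_pos (show 1 ≤ b + 1 by omega), if_pos (show b + 1 = 2 * (b + 1) / 2 by omega),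
      yuniformCoeff_of_le_two_mul (k := 2 * (b + 1) - 1) (by omega) (by omega),
      show 2 * (b + 1) = 2 * b + 2 by omega, yuniformCoeff_deletion_middle]
    simp only [show 2 * b + c + 3 - 1 = 2 * b + c + 2 by omega,
      show 2 * b + 2 - 1 = 2 * b + 1 by omega, show 2 * b + 1 - (b + 1) = b by omega,
      Nat.add_sub_cancel, yuniformCoeff_of_two_mul_le (show 2 * b ≤ 2 * b + 1 by omega)]
    ring
  · have htau : (if j = k / 2 then tauDel k n else 0) = 0 := by
      split_ifs with hj
      · rw [show k = 2 * j + 1 by omega, tauDel_two_mul_add_one]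
      · rfl
    rw [htau, sub_zero, yuniformCoeff_deletion_of_two_mul_ne hk hkn hmid]

end

/-- The inverse `Z`-polynomial deletion recursion for uniform matroids:
`Y_{k,n}(x) = Y_{k,n-1}(x) + (1+x)·Y_{k-1,n-1}(x) − τ_{k-1,n-1}·x^{k/2}` for `1 < k < n`. -/
theorem Yuniform_deletion_recursion (k n : ℕ) (hk : 1 < k) (hn : k < n) :
    Yuniform k n =
      Yuniform k (n - 1) + (1 + X) * Yuniform (k - 1) (n - 1)
        - C (tauDel k n) * X ^ (k / 2) := by
  ext j
  rw [coeff_sub, coeff_C_mul_X_pow, add_mul, one_mul, coeff_add, coeff_add,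
    ← pow_one (X : ℚ[X]), coeff_X_pow_mul', coeff_Yuniform (by omega) hn.le,
    coeff_Yuniform (by omega) (by omega : k ≤ n - 1),
    yuniformCoeff_deletion hk hn j]
  simp only [coeff_Yuniform (by omega : 0 < k - 1) (by omega : k - 1 ≤ n - 1)]
  ring
end

section
/- Let L be the lattice of flats of a finite loopless matroid M, and for flats F ≤ G let χ_{FG}(x) ∈ ℤ[x] be the characteristic polynomial of the minor M|_G / F. Then χ is a kernel in the incidence algebra over ℤ[x,x^{-1}]: Σ_{F ≤ H ≤ G} x^{rk(H)-rk(F)} χ_{FH}(x^{-1}) · χ_{HG}(x) = δ_{FG} for all F ≤ G, where δ_{FG} is 1 if F = G and 0 otherwise. -/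
open Matroid Set

namespace Matroid

variable {α : Type*}

/-- The deletion `M \ D` of a set `D` from a matroid `M`: the restriction to `M.E \ D`. -/
def delete' (M : Matroid α) (D : Set α) : Matroid α := M ↾ (M.E \ D)

/-- The contraction `M / C` of a set `C` in a matroid `M`, defined by duality. -/
def contract' (M : Matroid α) (C : Set α) : Matroid α := (M✶.delete' C)✶

/-- An element `e` is a coloop of `M` if it lies in every base. -/
def Coloop (M : Matroid α) (e : α) : Prop := ∀ ⦃B⦄, M.IsBase B → e ∈ B

/-- A matroid is loopless if every element of the ground set is independent. -/
def Loopless' (M : Matroid α) : Prop := ∀ e ∈ M.E, M.Indep {e}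

/-- The rank of a set `X` in a matroid `M`: the supremum of cardinalities of independent
subsets of `X`. -/
noncomputable def rk (M : Matroid α) (X : Set α) : ℕ :=
  sSup (Set.ncard '' {I | M.Indep I ∧ I ⊆ X})

/-- The closure of any set is a flat. -/
lemma flat_closure (M : Matroid α) (X : Set α) : M.IsFlat (M.closure X) := by
  rw [Matroid.closure_def, Set.sInter_eq_iInter]
  have : Nonempty {F // F ∈ {F | M.IsFlat F ∧ X ∩ M.E ⊆ F}} :=
    ⟨⟨M.E, M.ground_isFlat, Set.inter_subset_right⟩⟩
  exact Matroid.IsFlat.iInter fun F => F.2.1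

end Matroid

open Classical in
/-- The Möbius function of the lattice of flats of a matroid `M`. -/
noncomputable def Matroid.flatMu {α : Type*} [Fintype α] (M : Matroid α)
    (F G : {F : Set α // M.IsFlat F}) : ℤ :=
  letI : Fintype {F : Set α // M.IsFlat F} := Fintype.ofFinite _
  letI : LocallyFiniteOrder {F : Set α // M.IsFlat F} := Fintype.toLocallyFiniteOrder
  IncidenceAlgebra.mu ℤ F G

open Classical in
/-- The characteristic polynomial `χ_{FG}` of the minor `M|_G / F`, for flats `F ≤ G`:
`χ_{FG}(x) = Σ_{F ≤ H ≤ G} μ(F,H) x^{rk(G) − rk(H)}`. -/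
noncomputable def Matroid.flatChi {α : Type*} [Fintype α] (M : Matroid α)
    (F G : {F : Set α // M.IsFlat F}) : Polynomial ℤ :=
  letI : Fintype {F : Set α // M.IsFlat F} := Fintype.ofFinite _
  ∑ H ∈ Finset.univ.filter (fun H : {F : Set α // M.IsFlat F} => F ≤ H ∧ H ≤ G),
    Polynomial.C (M.flatMu F H) * Polynomial.X ^ (M.rk G.1 - M.rk H.1)

open Classical in
/-- The convolution `Σ_{F ≤ H ≤ G} x^{rk(H)−rk(F)} χ_{FH}(x⁻¹) · χ_{HG}(x)` in the
incidence algebra over `ℤ[x,x⁻¹]`. -/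
noncomputable def Matroid.chiKernelLHS {α : Type*} [Fintype α] (M : Matroid α)
    (F G : {F : Set α // M.IsFlat F}) : LaurentPolynomial ℤ :=
  letI : Fintype {F : Set α // M.IsFlat F} := Fintype.ofFinite _
  ∑ H ∈ Finset.univ.filter (fun H : {F : Set α // M.IsFlat F} => F ≤ H ∧ H ≤ G),
    LaurentPolynomial.T ((M.rk H.1 : ℤ) - (M.rk F.1 : ℤ)) *
      LaurentPolynomial.invert (Polynomial.toLaurent (M.flatChi F H)) *
      Polynomial.toLaurent (M.flatChi H G)

/-!
Write `D` for the diagonal element `diag (T ^ rk)` of the incidence algebra over `ℤ[T;T⁻¹]`.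
Then `χ = μ * D⁻¹ ζ D` and, since the Möbius function has integer values and so is fixed by
`T ↦ T⁻¹`, `χ^rev = D⁻¹ μ D * ζ`. Hence `χ^rev * χ = D⁻¹ μ D * (ζ * μ) * D⁻¹ ζ D = D⁻¹ (μ * ζ) D = 1`.
-/

open LaurentPolynomial

namespace IncidenceAlgebra

section Twist

variable {R ι : Type*} [CommSemiring R] [Preorder ι]

/-- Conjugation `f ↦ D⁻¹ f D` by the diagonal element `D = diag (T ^ r)`. -/
noncomputable def twist (r : ι → ℤ) (f : IncidenceAlgebra R[T;T⁻¹] ι) :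
    IncidenceAlgebra R[T;T⁻¹] ι :=
  ⟨fun a b => T (r b - r a) * f a b, fun a b h => by rw [apply_eq_zero_of_not_le h, mul_zero]⟩

/-- The paper's `κ^rev`, with `rk = r`. -/
noncomputable def rev (r : ι → ℤ) (f : IncidenceAlgebra R[T;T⁻¹] ι) :
    IncidenceAlgebra R[T;T⁻¹] ι :=
  ⟨fun a b => T (r b - r a) * invert (f a b), fun a b h => by
    rw [apply_eq_zero_of_not_le h, map_zero, mul_zero]⟩

@[simp] lemma twist_apply (r : ι → ℤ) (f : IncidenceAlgebra R[T;T⁻¹] ι) (a b : ι) :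
    twist r f a b = T (r b - r a) * f a b := rfl

@[simp] lemma rev_apply (r : ι → ℤ) (f : IncidenceAlgebra R[T;T⁻¹] ι) (a b : ι) :
    rev r f a b = T (r b - r a) * invert (f a b) := rfl

lemma twist_one [DecidableEq ι] (r : ι → ℤ) :
    twist r (1 : IncidenceAlgebra R[T;T⁻¹] ι) = 1 := by
  ext a b - : 1
  by_cases h : a = b <;> simp [h]

lemma twist_mul [LocallyFiniteOrder ι] (r : ι → ℤ) (f g : IncidenceAlgebra R[T;T⁻¹] ι) :
    twist r (f * g) = twist r f * twist r g := by
  ext a b - : 1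
  simp only [twist_apply, mul_apply, Finset.mul_sum]
  refine Finset.sum_congr rfl fun x _ => ?_
  rw [show r b - r a = (r x - r a) + (r b - r x) by ring, T_add]
  ring

end Twist

section Mu

variable {ι : Type*} [PartialOrder ι] [LocallyFiniteOrder ι] [DecidableEq ι]

lemma intCast_mu (R : Type*) [Ring R] (a b : ι) : ((mu ℤ a b : ℤ) : R) = mu R a b := by
  classical
  let μ : IncidenceAlgebra R ι :=
    ⟨fun a b => (mu ℤ a b : R), fun a b h => by rw [apply_eq_zero_of_not_le h, Int.cast_zero]⟩
  have hμ : μ * zeta R = 1 := by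
    ext a b - : 1
    calc (μ * zeta R : IncidenceAlgebra R ι) a b
        = ((∑ x ∈ Finset.Icc a b, mu ℤ a x : ℤ) : R) := by
          rw [mul_apply, Int.cast_sum]
          refine Finset.sum_congr rfl fun x hx => ?_
          simp [μ, (Finset.mem_Icc.1 hx).2]
      _ = (1 : IncidenceAlgebra R ι) a b := by
          rw [sum_Icc_mu_right, one_apply]
          split_ifs <;> simp
  show μ a b = _
  rw [left_inv_eq_right_inv hμ zeta_mul_mu]

variable {R : Type*} [CommRing R]

lemma invert_mu (a b : ι) : invert (mu R[T;T⁻¹] a b) = mu R[T;T⁻¹] a b := by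
  rw [← intCast_mu, map_intCast]

variable [DecidableLE ι]

variable (R) in
/-- Its entry at `a ≤ b` is the characteristic polynomial
`Σ_{a ≤ x ≤ b} μ(a, x) T ^ (r b - r x)` of the interval `[a, b]` ranked by `r`. -/
noncomputable def charPoly (r : ι → ℤ) : IncidenceAlgebra R[T;T⁻¹] ι :=
  mu R[T;T⁻¹] * twist r (zeta R[T;T⁻¹])

lemma rev_charPoly (r : ι → ℤ) :
    rev r (charPoly R r) = twist r (mu R[T;T⁻¹]) * zeta R[T;T⁻¹] := by
  ext a b - : 1
  simp only [charPoly, rev_apply, twist_apply, mul_apply, map_sum, Finset.mul_sum]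
  refine Finset.sum_congr rfl fun x hx => ?_
  obtain ⟨-, hxb⟩ := Finset.mem_Icc.1 hx
  rw [zeta_of_le hxb, mul_one, mul_one, map_mul, invert_mu, invert_T, mul_left_comm, ← T_add,
    mul_comm]
  congr 2
  ring

theorem rev_charPoly_mul_charPoly (r : ι → ℤ) : rev r (charPoly R r) * charPoly R r = 1 := by
  rw [rev_charPoly, charPoly, mul_assoc, ← mul_assoc (zeta _), zeta_mul_mu, one_mul, ← twist_mul,
    mu_mul_zeta, twist_one]

end Mu

end IncidenceAlgebra

lemma Matroid.rk_mono {α : Type*} [Finite α] (M : Matroid α) {X Y : Set α} (h : X ⊆ Y) :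
    M.rk X ≤ M.rk Y :=
  csSup_le_csSup ⟨Nat.card α, by rintro _ ⟨I, -, rfl⟩; exact ncard_le_card I⟩
    ⟨0, ∅, ⟨M.empty_indep, empty_subset X⟩, ncard_empty α⟩
    (image_mono fun I hI => ⟨hI.1, hI.2.trans h⟩)

section Flats

open Classical IncidenceAlgebra

universe u

variable {α : Type u} [Fintype α] (M : Matroid α)

-- The instances built into `flatMu`, `flatChi` and `chiKernelLHS`.
noncomputable local instance : Fintype {F : Set α // M.IsFlat F} := Fintype.ofFinite _

noncomputable local instance : LocallyFiniteOrder {F : Set α // M.IsFlat F} :=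
  Fintype.toLocallyFiniteOrder

namespace Matroid

noncomputable def flatRank (F : {F : Set α // M.IsFlat F}) : ℤ := M.rk F.1

lemma toLaurent_flatChi (F G : {F : Set α // M.IsFlat F}) :
    Polynomial.toLaurent (M.flatChi F G) = charPoly ℤ M.flatRank F G := by
  rw [flatChi, charPoly, mul_apply, Finset.filter_le_le_eq_Icc, map_sum]
  refine Finset.sum_congr rfl fun H hH => ?_
  obtain ⟨-, hHG⟩ := Finset.mem_Icc.1 hH
  rw [twist_apply, zeta_of_le hHG, mul_one, map_mul, Polynomial.toLaurent_C, eq_intCast,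
    flatMu, intCast_mu, Polynomial.toLaurent_X_pow, Nat.cast_sub (M.rk_mono hHG)]
  rfl

lemma chiKernelLHS_eq_rev_charPoly_mul_charPoly (F G : {F : Set α // M.IsFlat F}) :
    M.chiKernelLHS F G =
      (rev M.flatRank (charPoly ℤ M.flatRank) * charPoly ℤ M.flatRank) F G := by
  rw [chiKernelLHS, mul_apply, Finset.filter_le_le_eq_Icc]
  refine Finset.sum_congr rfl fun H _ => ?_
  rw [rev_apply, toLaurent_flatChi, toLaurent_flatChi]
  rfl

end Matroid

open Classical in
theorem Matroid.flatChi_kernel_general {α : Type*} [Fintype α] (M : Matroid α) :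
    ∀ F G : {F : Set α // M.IsFlat F}, F ≤ G →
      M.chiKernelLHS F G = if F = G then 1 else 0 := by
  intro F G _
  rw [M.chiKernelLHS_eq_rev_charPoly_mul_charPoly, rev_charPoly_mul_charPoly, one_apply]

open Classical in
/-- The characteristic polynomial is a kernel in the incidence algebra of the lattice of
flats of a finite loopless matroid:
`Σ_{F ≤ H ≤ G} x^{rk(H)−rk(F)} χ_{FH}(x⁻¹) · χ_{HG}(x) = δ_{FG}`. -/
theorem Matroid.flatChi_kernel {α : Type*} [Fintype α] (M : Matroid α)
    (hM : M.Loopless') :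
    ∀ F G : {F : Set α // M.IsFlat F}, F ≤ G →
      M.chiKernelLHS F G = if F = G then 1 else 0 :=
  Matroid.flatChi_kernel_general M

end Flats
end
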